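/- arXiv:2403.09938 — 3 statements merged into one kernel-verified Lean document; each statement's English description precedes it below -/
import Mathlib

section
/- Fix I = {0 = i_0 < i_1 < … < i_r = m}. The map filter_I : W^I_m → W_{[1,i_1]} □ W_{[i_1+1,i_2]} □ ⋯ □ W_{[i_{r−1}+1,m]}, defined on vertices by w ↦ filter_I(w) = (w^{(1)},…,w^{(r)}), is a local isomorphism of pre-crystal graphs. -/
namespace FilteredRSK

/-! ## Words and crystal operators (via parenthesis matching) -/

/-- Scan the word `w`, treating each letter `i` as a `)` and each letter `i+1` as a `(`,
matching parentheses in the usual way.  Returns the pair consisting of the list of positions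
of unmatched `)` (rightmost first) and the stack of positions of unmatched `(`
(most recent first, so the leftmost unmatched `(` is the last entry). -/
def bracketScan (i : ℕ) (w : List ℕ) : List ℕ × List ℕ :=
  (w.zipIdx.map Prod.swap).foldl
    (fun (st : List ℕ × List ℕ) (p : ℕ × ℕ) =>
      if p.2 = i + 1 then (st.1, p.1 :: st.2)
      else if p.2 = i then
        match st.2 with
        | [] => (p.1 :: st.1, [])
        | _ :: rest => (st.1, rest)
      else st)
    ([], [])

/-- Position of the rightmost unmatched `)` of `bracket_i(w)`, if any. -/
def fPos (i : ℕ) (w : List ℕ) : Option ℕ := (bracketScan i w).1.head?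

/-- Position of the leftmost unmatched `(` of `bracket_i(w)`, if any. -/
def ePos (i : ℕ) (w : List ℕ) : Option ℕ := (bracketScan i w).2.getLast?

/-- The crystal lowering operator `f_i`: change the letter `i` at the rightmost unmatched `)`
to `i+1`; output `∅` (i.e. `none`) if there is no unmatched `)`. -/
def fWord (i : ℕ) (w : List ℕ) : Option (List ℕ) := (fPos i w).map fun p => w.set p (i + 1)

/-- The crystal raising operator `e_i`: change the letter `i+1` at the leftmost unmatched `(`
to `i`; output `∅` (i.e. `none`) if there is no unmatched `(`. -/
def eWord (i : ℕ) (w : List ℕ) : Option (List ℕ) := (ePos i w).map fun p => w.set p i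

/-! ## Tableaux -/

/-- A tableau is a list of rows (top to bottom).  Its column reading word reads each column
bottom-to-top, columns left to right. -/
def readingWord (T : List (List ℕ)) : List ℕ :=
  (List.range (T.headD []).length).flatMap fun j => (T.filterMap fun row => row[j]?).reverse

/-- Semistandardness: all rows nonempty, rows weakly increase, row lengths weakly decrease,
and columns strictly increase. -/
def IsSSYT (T : List (List ℕ)) : Prop :=
  (∀ row ∈ T, row ≠ []) ∧
  (∀ row ∈ T, row.Chain' (· ≤ ·)) ∧
  T.Chain' (fun row row' => row'.length ≤ row.length ∧
    ∀ j < row'.length, row.getD j 0 < row'.getD j 0)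

/-- All entries of the tableau `T` lie in the interval `[a, b]`. -/
def entriesIn (T : List (List ℕ)) (a b : ℕ) : Prop := ∀ row ∈ T, ∀ x ∈ row, a ≤ x ∧ x ≤ b

/-- The shape of a tableau: the list of its row lengths. -/
def shape (T : List (List ℕ)) : List ℕ := T.map List.length

/-- A partition: a weakly decreasing list of positive integers. -/
def IsPartition (lam : List ℕ) : Prop :=
  lam.Chain' (fun x y => y ≤ x) ∧ ∀ x ∈ lam, 0 < x

/-- Row insertion of `x` into a single row: replace the first entry strictly larger than `x`
(and bump it out), or append `x` at the end. -/
def insertRow (row : List ℕ) (x : ℕ) : List ℕ × Option ℕ :=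
  match row.findIdx? (fun y => decide (x < y)) with
  | none => (row ++ [x], none)
  | some k => (row.set k x, row[k]?)

/-- Row insertion of a letter into a tableau. -/
def insertTab : List (List ℕ) → ℕ → List (List ℕ)
  | [], x => [[x]]
  | row :: rest, x =>
    match insertRow row x with
    | (row', none) => row' :: rest
    | (row', some y) => row' :: insertTab rest y

/-- The insertion tableau of a word, obtained by successive row insertion of its letters. -/
def tabOf (w : List ℕ) : List (List ℕ) := w.foldl insertTab []

/-- The highest-weight tableau of shape `lam` with entries from `[a, b]`:
row `i` (0-indexed) is constantly filled with `a + i`. -/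
def highestTab (lam : List ℕ) (a : ℕ) : List (List ℕ) :=
  lam.mapIdx fun i len => List.replicate len (a + i)

/-! ## Knuth equivalence -/

/-- Elementary Knuth moves. -/
inductive KnuthStep : List ℕ → List ℕ → Prop
  | yzx (u v : List ℕ) (x y z : ℕ) (h1 : x < y) (h2 : y ≤ z) :
      KnuthStep (u ++ y :: z :: x :: v) (u ++ y :: x :: z :: v)
  | zxy (u v : List ℕ) (x y z : ℕ) (h1 : x ≤ y) (h2 : y < z) :
      KnuthStep (u ++ z :: x :: y :: v) (u ++ x :: z :: y :: v)

/-- Knuth equivalence: the equivalence relation generated by elementary Knuth moves. -/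
def KnuthEquiv : List ℕ → List ℕ → Prop := Relation.EqvGen KnuthStep

/-- The Knuth equivalence class of a word. -/
def KClass (w : List ℕ) : Set (List ℕ) := {v | KnuthEquiv w v}

open Classical in
/-- A representative of a (nonempty) set of words. -/
noncomputable def classRep (C : Set (List ℕ)) : List ℕ :=
  if h : C.Nonempty then h.some else []

/-- The weight of a Knuth class, defined via a representative. -/
noncomputable def classWt (C : Set (List ℕ)) : Multiset ℕ := ↑(classRep C)

/-- The insertion tableau of a Knuth class (as the reading word of the tableau),
defined via a representative. -/
noncomputable def classTab (C : Set (List ℕ)) : List ℕ := readingWord (tabOf (classRep C))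

/-! ## Pre-crystal graphs -/

/-- A pre-crystal graph: a directed graph with edge labels in `L` and
vertex weights in `W`, together with a distinguished set of vertices. -/
structure PCG (V : Type*) (L : Type*) (W : Type*) where
  verts : Set V
  wt : V → W
  E : L → V → V → Prop

namespace PCG

variable {V V' L L' W W' : Type*}

/-- Underlying undirected adjacency between vertices. -/
def Adj (G : PCG V L W) (u v : V) : Prop :=
  u ∈ G.verts ∧ v ∈ G.verts ∧ ∃ l, G.E l u v ∨ G.E l v u

/-- `u` and `v` lie in the same connected component. -/
def Reach (G : PCG V L W) : V → V → Prop := Relation.ReflTransGen G.Adj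

/-- The connected component of `v` in `G`, as a pre-crystal graph. -/
def comp (G : PCG V L W) (v : V) : PCG V L W where
  verts := {u | u ∈ G.verts ∧ G.Reach v u}
  wt := G.wt
  E := G.E

/-- A pre-crystal graph homomorphism (with weights translated along `ω`):
a vertex map preserving weights and labelled edges. -/
def IsHomVia (G : PCG V L W) (H : PCG V' L W') (ω : W → W') (f : V → V') : Prop :=
  (∀ v ∈ G.verts, f v ∈ H.verts) ∧
  (∀ v ∈ G.verts, H.wt (f v) = ω (G.wt v)) ∧
  (∀ (l : L), ∀ u ∈ G.verts, ∀ v ∈ G.verts, G.E l u v → H.E l (f u) (f v))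

/-- A local isomorphism of pre-crystal graphs: a homomorphism whose restriction to each
connected component of `G` is an isomorphism onto a connected component of `H`. -/
def IsLocalIsoVia (G : PCG V L W) (H : PCG V' L W') (ω : W → W') (f : V → V') : Prop :=
  IsHomVia G H ω f ∧
  (∀ u ∈ G.verts, ∀ v ∈ G.verts, G.Reach u v → f u = f v → u = v) ∧
  (∀ u ∈ G.verts, ∀ v' ∈ H.verts, H.Reach (f u) v' → ∃ v ∈ G.verts, G.Reach u v ∧ f v = v') ∧
  (∀ (l : L), ∀ u ∈ G.verts, ∀ v ∈ G.verts, G.Reach u v → H.E l (f u) (f v) → G.E l u v)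

/-- An isomorphism of pre-crystal graphs. -/
def IsIsoVia (G : PCG V L W) (H : PCG V' L W') (ω : W → W') (f : V → V') : Prop :=
  IsHomVia G H ω f ∧ Set.BijOn f G.verts H.verts ∧
  (∀ (l : L), ∀ u ∈ G.verts, ∀ v ∈ G.verts, H.E l (f u) (f v) → G.E l u v)

/-- Two pre-crystal graphs are isomorphic (with weights identified along `ω`). -/
def IsomorphicVia (G : PCG V L W) (H : PCG V' L W') (ω : W → W') : Prop :=
  ∃ f, IsIsoVia G H ω f

/-- The Cartesian product of two pre-crystal graphs; edge labels form the disjoint union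
of the two label sets, and weights are concatenated. -/
def prod (G : PCG V L W) (H : PCG V' L' W') : PCG (V × V') (L ⊕ L') (W × W') where
  verts := {p | p.1 ∈ G.verts ∧ p.2 ∈ H.verts}
  wt := fun p => (G.wt p.1, H.wt p.2)
  E := fun l p q =>
    match l with
    | Sum.inl a => G.E a p.1 q.1 ∧ p.2 = q.2
    | Sum.inr b => H.E b p.2 q.2 ∧ p.1 = q.1

/-- The Cartesian product of a finite family of pre-crystal graphs sharing a common ambient
label set (with disjoint effective labels, as for crystals of words on disjoint intervals):
an edge labelled `l` acts in a single coordinate and fixes all others. -/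
def pi {r : ℕ} (G : Fin r → PCG V L W) : PCG (Fin r → V) L (Fin r → W) where
  verts := {p | ∀ k, p k ∈ (G k).verts}
  wt := fun p k => (G k).wt (p k)
  E := fun l p q => ∃ k, (G k).E l (p k) (q k) ∧ ∀ k', k' ≠ k → p k' = q k'

end PCG

/-! ## Word, tableau and Knuth crystal graphs -/

/-- The word crystal graph `W_{[a,b]}`: vertices are the words on the alphabet `[a,b]`,
the weight of a word is its multiset of letters (recording the number of occurrences of
each letter), and there is an edge `w →ᵢ v` iff `v = f_i(w)` (for `a ≤ i < b`). -/
def WordGraph (a b : ℕ) : PCG (List ℕ) ℕ (Multiset ℕ) where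
  verts := {w | ∀ x ∈ w, a ≤ x ∧ x ≤ b}
  wt := fun w => ↑w
  E := fun i u v => a ≤ i ∧ i < b ∧ fWord i u = some v

/-- The disjoint union `⊕_λ B_{λ,[a,b]}` of all tableau crystal graphs with entries in
`[a,b]`: the induced subgraph of `W_{[a,b]}` on reading words of semistandard tableaux. -/
def TabWordGraph (a b : ℕ) : PCG (List ℕ) ℕ (Multiset ℕ) where
  verts := {w | ∃ T, IsSSYT T ∧ entriesIn T a b ∧ readingWord T = w}
  wt := fun w => ↑w
  E := fun i u v => a ≤ i ∧ i < b ∧ fWord i u = some v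

/-- The tableau crystal graph `B_{λ,[a,b]}`: the induced subgraph of `W_{[a,b]}` on the
reading words of semistandard tableaux of shape `λ` with entries in `[a,b]`. -/
def BGraph (lam : List ℕ) (a b : ℕ) : PCG (List ℕ) ℕ (Multiset ℕ) where
  verts := {w | ∃ T, IsSSYT T ∧ shape T = lam ∧ entriesIn T a b ∧ readingWord T = w}
  wt := fun w => ↑w
  E := fun i u v => a ≤ i ∧ i < b ∧ fWord i u = some v

/-- The Knuth crystal graph `K_{[a,b]}`: vertices are Knuth equivalence classes of words on
`[a,b]`, weights via representatives, with an edge `C →ᵢ C'` iff some representatives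
`w ∈ C`, `w' ∈ C'` satisfy `w' = f_i(w)`. -/
noncomputable def KnuthGraph (a b : ℕ) : PCG (Set (List ℕ)) ℕ (Multiset ℕ) where
  verts := {C | ∃ w, (∀ x ∈ w, a ≤ x ∧ x ≤ b) ∧ C = KClass w}
  wt := classWt
  E := fun i C C' => ∃ w ∈ C, ∃ w' ∈ C', a ≤ i ∧ i < b ∧ fWord i w = some w'

/-! ## Filtrations -/

/-- `ι` enumerates a filtration `0 = i₀ < i₁ < ⋯ < i_r = m` of `[0, m]`. -/
def IsFiltration (m : ℕ) {r : ℕ} (ι : Fin (r + 1) → ℕ) : Prop :=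
  StrictMono ι ∧ ι 0 = 0 ∧ ι (Fin.last r) = m

/-- The subword of `w` consisting of all letters in the interval `[lo + 1, hi]`. -/
def blockFilter (lo hi : ℕ) (w : List ℕ) : List ℕ :=
  w.filter fun x => decide (lo + 1 ≤ x ∧ x ≤ hi)

/-- The `I`-filtration of a word: the tuple of subwords on the letter intervals
`[i_{k-1}+1, i_k]`. -/
def filterWord {r : ℕ} (ι : Fin (r + 1) → ℕ) (w : List ℕ) : Fin r → List ℕ :=
  fun k => blockFilter (ι k.castSucc) (ι k.succ) w

/-- The canonical splitting of a weight (a multiset of letters) along the intervals of a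
filtration. -/
def splitWt {r : ℕ} (ι : Fin (r + 1) → ℕ) (s : Multiset ℕ) : Fin r → Multiset ℕ :=
  fun k => s.filter fun x => ι k.castSucc + 1 ≤ x ∧ x ≤ ι k.succ

/-- The `I`-filtered word crystal graph `W^I_m`: the subgraph of `W_m = W_{[1,m]}` obtained
by deleting all edges labelled by elements of `I`. -/
def FilteredWordGraph (m : ℕ) (I : Set ℕ) : PCG (List ℕ) ℕ (Multiset ℕ) where
  verts := {w | ∀ x ∈ w, 1 ≤ x ∧ x ≤ m}
  wt := fun w => ↑w
  E := fun i u v => i ∉ I ∧ 1 ≤ i ∧ i < m ∧ fWord i u = some v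

/-- The `I`-filtered Knuth crystal graph `K^I_m`: the quotient of `W^I_m` by Knuth
equivalence. -/
noncomputable def FilteredKnuthGraph (m : ℕ) (I : Set ℕ) :
    PCG (Set (List ℕ)) ℕ (Multiset ℕ) where
  verts := {C | ∃ w, (∀ x ∈ w, 1 ≤ x ∧ x ≤ m) ∧ C = KClass w}
  wt := classWt
  E := fun i C C' => i ∉ I ∧ ∃ w ∈ C, ∃ w' ∈ C', 1 ≤ i ∧ i < m ∧ fWord i w = some w'

/-- The product `W_{[1,i₁]} □ W_{[i₁+1,i₂]} □ ⋯ □ W_{[i_{r-1}+1,m]}`. -/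
def WordPiGraph {r : ℕ} (ι : Fin (r + 1) → ℕ) :
    PCG (Fin r → List ℕ) ℕ (Fin r → Multiset ℕ) :=
  PCG.pi fun k => WordGraph (ι k.castSucc + 1) (ι k.succ)

/-- The product `K_{[1,i₁]} □ K_{[i₁+1,i₂]} □ ⋯ □ K_{[i_{r-1}+1,m]}`. -/
noncomputable def KnuthPiGraph {r : ℕ} (ι : Fin (r + 1) → ℕ) :
    PCG (Fin r → Set (List ℕ)) ℕ (Fin r → Multiset ℕ) :=
  PCG.pi fun k => KnuthGraph (ι k.castSucc + 1) (ι k.succ)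

/-- The disjoint union, over all `I`-filtered partition-tuples `λ`, of the filtered tableau
crystal graphs `B_{λ,m} = B_{λ⁽¹⁾,[1,i₁]} □ ⋯ □ B_{λ⁽ʳ⁾,[i_{r-1}+1,m]}`. -/
def TabPiGraph {r : ℕ} (ι : Fin (r + 1) → ℕ) :
    PCG (Fin r → List ℕ) ℕ (Fin r → Multiset ℕ) :=
  PCG.pi fun k => TabWordGraph (ι k.castSucc + 1) (ι k.succ)

/-- The `I`-filtered tableau crystal graph `B_{λ,m}` of shape-tuple `λ`. -/
def BPiGraph {r : ℕ} (ι : Fin (r + 1) → ℕ) (lam : Fin r → List ℕ) :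
    PCG (Fin r → List ℕ) ℕ (Fin r → Multiset ℕ) :=
  PCG.pi fun k => BGraph (lam k) (ι k.castSucc + 1) (ι k.succ)

/-- The map on Knuth classes induced by the `I`-filtration (via a representative). -/
noncomputable def classFilter {r : ℕ} (ι : Fin (r + 1) → ℕ) (C : Set (List ℕ)) :
    Fin r → Set (List ℕ) :=
  fun k => KClass (filterWord ι (classRep C) k)

/-- An `I`-filtered partition-tuple: each `λ⁽ᵏ⁾` is a partition with at most
`i_k - i_{k-1}` rows. -/
def IsFilteredShape {r : ℕ} (ι : Fin (r + 1) → ℕ) (lam : Fin r → List ℕ) : Prop :=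
  ∀ k, IsPartition (lam k) ∧ (lam k).length ≤ ι k.succ - ι k.castSucc

/-- The highest-weight tableau-tuple of shape-tuple `λ`: its `k`-th component is the
highest-weight tableau of shape `λ⁽ᵏ⁾` with entries from `[i_{k-1}+1, i_k]`. -/
def highestTabs {r : ℕ} (ι : Fin (r + 1) → ℕ) (lam : Fin r → List ℕ) :
    Fin r → List (List ℕ) :=
  fun k => highestTab (lam k) (ι k.castSucc + 1)

/-! ## Matrices, row/column words and bicrystal operators -/

/-- The row word of a nonnegative integer matrix: record `M i j` copies of the (1-based) row
index `i + 1` for each entry, reading columns top-to-bottom, left to right. -/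
def rowWord {m n : ℕ} (M : Matrix (Fin m) (Fin n) ℕ) : List ℕ :=
  (List.finRange n).flatMap fun j => (List.finRange m).flatMap fun i =>
    List.replicate (M i j) ((i : ℕ) + 1)

/-- The column word: record `M i j` copies of the (1-based) column index `j + 1` for each
entry, reading rows left-to-right, top to bottom. -/
def colWord {m n : ℕ} (M : Matrix (Fin m) (Fin n) ℕ) : List ℕ :=
  (List.finRange m).flatMap fun i => (List.finRange n).flatMap fun j =>
    List.replicate (M i j) ((j : ℕ) + 1)

/-- The list of matrix cells producing the successive letters of `rowWord M`. -/
def rowCells {m n : ℕ} (M : Matrix (Fin m) (Fin n) ℕ) : List (Fin m × Fin n) :=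
  (List.finRange n).flatMap fun j => (List.finRange m).flatMap fun i =>
    List.replicate (M i j) (i, j)

/-- The list of matrix cells producing the successive letters of `colWord M`. -/
def colCells {m n : ℕ} (M : Matrix (Fin m) (Fin n) ℕ) : List (Fin m × Fin n) :=
  (List.finRange m).flatMap fun i => (List.finRange n).flatMap fun j =>
    List.replicate (M i j) (i, j)

/-- Subtract `1` at the cell `c` and add `1` at the cell directly below. -/
def shiftDown {m n : ℕ} (M : Matrix (Fin m) (Fin n) ℕ) (c : Fin m × Fin n) :
    Matrix (Fin m) (Fin n) ℕ := fun a b =>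
  if a = c.1 ∧ b = c.2 then M a b - 1
  else if (a : ℕ) = (c.1 : ℕ) + 1 ∧ b = c.2 then M a b + 1
  else M a b

/-- Subtract `1` at the cell `c` and add `1` at the cell directly above. -/
def shiftUp {m n : ℕ} (M : Matrix (Fin m) (Fin n) ℕ) (c : Fin m × Fin n) :
    Matrix (Fin m) (Fin n) ℕ := fun a b =>
  if a = c.1 ∧ b = c.2 then M a b - 1
  else if (a : ℕ) + 1 = (c.1 : ℕ) ∧ b = c.2 then M a b + 1
  else M a b

/-- Subtract `1` at the cell `c` and add `1` at the cell directly to the right. -/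
def shiftRight {m n : ℕ} (M : Matrix (Fin m) (Fin n) ℕ) (c : Fin m × Fin n) :
    Matrix (Fin m) (Fin n) ℕ := fun a b =>
  if a = c.1 ∧ b = c.2 then M a b - 1
  else if a = c.1 ∧ (b : ℕ) = (c.2 : ℕ) + 1 then M a b + 1
  else M a b

/-- Subtract `1` at the cell `c` and add `1` at the cell directly to the left. -/
def shiftLeft {m n : ℕ} (M : Matrix (Fin m) (Fin n) ℕ) (c : Fin m × Fin n) :
    Matrix (Fin m) (Fin n) ℕ := fun a b =>
  if a = c.1 ∧ b = c.2 then M a b - 1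
  else if a = c.1 ∧ (b : ℕ) + 1 = (c.2 : ℕ) then M a b + 1
  else M a b

/-- The row bicrystal lowering operator `f_i^row`, transporting `f_i` through `rowWord`. -/
def fRow {m n : ℕ} (i : ℕ) (M : Matrix (Fin m) (Fin n) ℕ) :
    Option (Matrix (Fin m) (Fin n) ℕ) :=
  (fPos i (rowWord M)).bind fun p => ((rowCells M)[p]?).map fun c => shiftDown M c

/-- The row bicrystal raising operator `e_i^row`, transporting `e_i` through `rowWord`. -/
def eRow {m n : ℕ} (i : ℕ) (M : Matrix (Fin m) (Fin n) ℕ) :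
    Option (Matrix (Fin m) (Fin n) ℕ) :=
  (ePos i (rowWord M)).bind fun p => ((rowCells M)[p]?).map fun c => shiftUp M c

/-- The column bicrystal lowering operator `f_j^col`, transporting `f_j` through `colWord`. -/
def fCol {m n : ℕ} (j : ℕ) (M : Matrix (Fin m) (Fin n) ℕ) :
    Option (Matrix (Fin m) (Fin n) ℕ) :=
  (fPos j (colWord M)).bind fun p => ((colCells M)[p]?).map fun c => shiftRight M c

/-- The column bicrystal raising operator `e_j^col`, transporting `e_j` through `colWord`. -/
def eCol {m n : ℕ} (j : ℕ) (M : Matrix (Fin m) (Fin n) ℕ) :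
    Option (Matrix (Fin m) (Fin n) ℕ) :=
  (ePos j (colWord M)).bind fun p => ((colCells M)[p]?).map fun c => shiftLeft M c

/-- The pre-crystal graph `M^row_{m,n}`: vertices are all matrices in `Mat_{m,n}(ℤ≥0)`,
weights are row-sums (the weight of the row word), edges `M →ᵢ f_i^row(M)`. -/
def MRowGraph (m n : ℕ) : PCG (Matrix (Fin m) (Fin n) ℕ) ℕ (Multiset ℕ) where
  verts := Set.univ
  wt := fun M => ↑(rowWord M)
  E := fun i M M' => 1 ≤ i ∧ i < m ∧ fRow i M = some M'

/-- The pre-crystal graph `M^col_{m,n}`. -/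
def MColGraph (m n : ℕ) : PCG (Matrix (Fin m) (Fin n) ℕ) ℕ (Multiset ℕ) where
  verts := Set.univ
  wt := fun M => ↑(colWord M)
  E := fun j M M' => 1 ≤ j ∧ j < n ∧ fCol j M = some M'

/-- The matrix bicrystal graph `M_{m,n}`, with edges labelled `i^row` (`Sum.inl i`) and
`j^col` (`Sum.inr j`), and weight the pair (row-sum tuple, column-sum tuple). -/
def MatGraph (m n : ℕ) :
    PCG (Matrix (Fin m) (Fin n) ℕ) (ℕ ⊕ ℕ) (Multiset ℕ × Multiset ℕ) where
  verts := Set.univ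
  wt := fun M => (↑(rowWord M), ↑(colWord M))
  E := fun l M M' =>
    match l with
    | Sum.inl i => 1 ≤ i ∧ i < m ∧ fRow i M = some M'
    | Sum.inr j => 1 ≤ j ∧ j < n ∧ fCol j M = some M'

/-- The `(I|J)`-filtered matrix bicrystal graph `M^{I|J}_{m,n}`: delete the edges labelled
`i^row` with `i ∈ I` and `j^col` with `j ∈ J`. -/
def FilteredMatGraph (m n : ℕ) (I J : Set ℕ) :
    PCG (Matrix (Fin m) (Fin n) ℕ) (ℕ ⊕ ℕ) (Multiset ℕ × Multiset ℕ) where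
  verts := Set.univ
  wt := fun M => (↑(rowWord M), ↑(colWord M))
  E := fun l M M' =>
    match l with
    | Sum.inl i => i ∉ I ∧ 1 ≤ i ∧ i < m ∧ fRow i M = some M'
    | Sum.inr j => j ∉ J ∧ 1 ≤ j ∧ j < n ∧ fCol j M = some M'

/-- `filterRSK_{I|J}` at the level of reading words: apply the insertion tableau map to each
component of the filtrations of the row and column words, recording reading words. -/
def filterRSKw {m n r s : ℕ} (ι : Fin (r + 1) → ℕ) (κ : Fin (s + 1) → ℕ)
    (M : Matrix (Fin m) (Fin n) ℕ) : (Fin r → List ℕ) × (Fin s → List ℕ) :=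
  (fun k => readingWord (tabOf (filterWord ι (rowWord M) k)),
   fun k => readingWord (tabOf (filterWord κ (colWord M) k)))

/-- `filterRSK_{I|J}` at the level of tableaux. -/
def filterRSKt {m n r s : ℕ} (ι : Fin (r + 1) → ℕ) (κ : Fin (s + 1) → ℕ)
    (M : Matrix (Fin m) (Fin n) ℕ) :
    (Fin r → List (List ℕ)) × (Fin s → List (List ℕ)) :=
  (fun k => tabOf (filterWord ι (rowWord M) k),
   fun k => tabOf (filterWord κ (colWord M) k))

/-- A matrix is a highest-weight vertex of `M^{I|J}_{m,n}`:
`e_i^row(M) = ∅` for all `i ∉ I` and `e_j^col(M) = ∅` for all `j ∉ J`. -/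
def MatHighest {m n : ℕ} (I J : Set ℕ) (M : Matrix (Fin m) (Fin n) ℕ) : Prop :=
  (∀ i, 1 ≤ i → i < m → i ∉ I → eRow i M = none) ∧
  (∀ j, 1 ≤ j → j < n → j ∉ J → eCol j M = none)

/-- A set of matrices is `(I|J)`-bicrystal closed if it is closed under the bicrystal
operators `e_i^row, f_i^row` (`i ∉ I`) and `e_j^col, f_j^col` (`j ∉ J`). -/
def BicrystalClosed {m n : ℕ} (I J : Set ℕ) (S : Set (Matrix (Fin m) (Fin n) ℕ)) : Prop :=
  ∀ M ∈ S,
    (∀ i, 1 ≤ i → i < m → i ∉ I →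
      (∀ N, fRow i M = some N → N ∈ S) ∧ (∀ N, eRow i M = some N → N ∈ S)) ∧
    (∀ j, 1 ≤ j → j < n → j ∉ J →
      (∀ N, fCol j M = some N → N ∈ S) ∧ (∀ N, eCol j M = some N → N ∈ S))

/-- The induced pre-crystal subgraph of `M^{I|J}_{m,n}` on a set `S` of matrices. -/
def inducedMatGraph (m n : ℕ) (I J : Set ℕ) (S : Set (Matrix (Fin m) (Fin n) ℕ)) :
    PCG (Matrix (Fin m) (Fin n) ℕ) (ℕ ⊕ ℕ) (Multiset ℕ × Multiset ℕ) where
  verts := S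
  wt := fun M => (↑(rowWord M), ↑(colWord M))
  E := (FilteredMatGraph m n I J).E

/-- The disjoint union, over the highest-weight matrices `M₀ ∈ S` (hence with multiplicity
`c_{λ|μ}` for each filtered partition-tuple `(λ|μ)`), of copies of `B_{λ,m} □ B_{μ,n}` where
`(λ|μ)` is the shape of `filterRSK_{I|J}(M₀)`. -/
def sumCopiesGraph {m n : ℕ} {r s : ℕ} (ι : Fin (r + 1) → ℕ) (κ : Fin (s + 1) → ℕ)
    (S : Set (Matrix (Fin m) (Fin n) ℕ)) :
    PCG (Matrix (Fin m) (Fin n) ℕ × ((Fin r → List ℕ) × (Fin s → List ℕ))) (ℕ ⊕ ℕ)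
      ((Fin r → Multiset ℕ) × (Fin s → Multiset ℕ)) where
  verts := {Mp | Mp.1 ∈ S ∧ MatHighest (Set.range ι) (Set.range κ) Mp.1 ∧
    ∃ lam mu, IsFilteredShape ι lam ∧ IsFilteredShape κ mu ∧
      filterRSKt ι κ Mp.1 = (highestTabs ι lam, highestTabs κ mu) ∧
      Mp.2 ∈ (PCG.prod (BPiGraph ι lam) (BPiGraph κ mu)).verts}
  wt := fun Mp => (PCG.prod (TabPiGraph ι) (TabPiGraph κ)).wt Mp.2
  E := fun l Mp Mq =>
    Mp.1 = Mq.1 ∧ (PCG.prod (TabPiGraph ι) (TabPiGraph κ)).E l Mp.2 Mq.2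

/-! ## 1-based matrix entries and shape vectors -/

/-- The `(i,j)` entry of `M` in 1-based coordinates, with the convention that entries outside
the matrix are `0`. -/
def ent {m n : ℕ} (M : Matrix (Fin m) (Fin n) ℕ) (i j : ℕ) : ℕ :=
  if h : 1 ≤ i ∧ i ≤ m ∧ 1 ≤ j ∧ j ≤ n then M ⟨i - 1, by omega⟩ ⟨j - 1, by omega⟩ else 0

/-- The partition `(lam (lo+1), lam (lo+2), …, lam (lo+size))` with trailing zero parts
removed: the shape of the block of a filtered partition-tuple written as an integer vector. -/
def blockShape (lam : ℕ → ℕ) (lo size : ℕ) : List ℕ :=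
  ((List.range size).map fun t => lam (lo + t + 1)).filter fun x => decide (0 < x)

/-- The highest-weight tableau-tuple of the filtered partition-tuple written as an integer
vector `lam : ℕ → ℕ` (1-based). -/
def highestFromVec {r : ℕ} (ι : Fin (r + 1) → ℕ) (lam : ℕ → ℕ) : Fin r → List (List ℕ) :=
  fun k => highestTab (blockShape lam (ι k.castSucc) (ι k.succ - ι k.castSucc))
    (ι k.castSucc + 1)

/-! ## Partial permutations and matrix Schubert combinatorics -/

/-- A partial permutation: at most one `1` in each row and column; encoded as an injective
partial function from rows to columns (`none` encodes `∞`). -/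
def IsPartialPerm {m n : ℕ} (w : Fin m → Option (Fin n)) : Prop :=
  ∀ a a' b, w a = some b → w a' = some b → a = a'

/-- The cell `(i, j)` lies in the Rothe diagram `D(w)`: it is not weakly below nor weakly
right of a dot of the partial permutation matrix. -/
def InD {m n : ℕ} (w : Fin m → Option (Fin n)) (i : Fin m) (j : Fin n) : Prop :=
  (∀ b, w i = some b → (j : ℕ) < (b : ℕ)) ∧ (∀ a, a ≤ i → w a ≠ some j)

/-- The row descent positions of `w` (1-based): rows `i` such that the rightmost box of
`D(w)` in row `i` is strictly right of the rightmost box in row `i + 1`. -/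
def DescRow {m n : ℕ} (w : Fin m → Option (Fin n)) : Set ℕ :=
  {i | ∃ (h1 : 1 ≤ i) (h2 : i < m), ∃ j : Fin n,
    InD w ⟨i - 1, by omega⟩ j ∧ ∀ j' : Fin n, InD w ⟨i, h2⟩ j' → (j' : ℕ) < (j : ℕ)}

/-- The column descent positions of `w` (1-based). -/
def DescCol {m n : ℕ} (w : Fin m → Option (Fin n)) : Set ℕ :=
  {j | ∃ (h1 : 1 ≤ j) (h2 : j < n), ∃ i : Fin m,
    InD w i ⟨j - 1, by omega⟩ ∧ ∀ i' : Fin m, InD w i' ⟨j, h2⟩ → (i' : ℕ) < (i : ℕ)}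

/-- The rank function `r_w(i,j)`: the rank of the northwest `i × j` submatrix of the partial
permutation matrix, i.e. the number of dots in that submatrix. -/
noncomputable def rankFn {m n : ℕ} (w : Fin m → Option (Fin n)) (i j : ℕ) : ℕ :=
  Set.ncard {a : Fin m | (a : ℕ) < i ∧ ∃ b : Fin n, w a = some b ∧ (b : ℕ) < j}

/-- The matrix Schubert variety `X_w ⊆ Mat_{m,n}(ℂ)`: matrices whose northwest `i × j`
submatrices have rank at most `r_w(i,j)`. -/
def XSchubert {m n : ℕ} (w : Fin m → Option (Fin n)) : Set (Matrix (Fin m) (Fin n) ℂ) :=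
  {A | ∀ (i : ℕ) (hi : i ≤ m) (j : ℕ) (hj : j ≤ n),
    (A.submatrix (Fin.castLE hi) (Fin.castLE hj)).rank ≤ rankFn w i j}

/-- `g` is block-diagonal with diagonal blocks of sizes `i₁ - i₀, …, i_r - i_{r-1}`. -/
def IsBlockDiag {m : ℕ} {r : ℕ} (ι : Fin (r + 1) → ℕ) (g : Matrix (Fin m) (Fin m) ℂ) :
    Prop :=
  ∀ a b : Fin m,
    (¬ ∃ k : Fin r, ι k.castSucc ≤ (a : ℕ) ∧ (a : ℕ) < ι k.succ ∧
        ι k.castSucc ≤ (b : ℕ) ∧ (b : ℕ) < ι k.succ) → g a b = 0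

/-- `(p, q)` (0-based) is a cell of the essential set `E(w)`. -/
def EssCell {m n : ℕ} (w : Fin m → Option (Fin n)) (p : Fin m) (q : Fin n) : Prop :=
  InD w p q ∧ (∀ hq : (q : ℕ) + 1 < n, ¬ InD w p ⟨(q : ℕ) + 1, hq⟩) ∧
    (∀ hp : (p : ℕ) + 1 < m, ¬ InD w ⟨(p : ℕ) + 1, hp⟩ q)

/-- `N` carries an antidiagonal of some Fulton generator of the Schubert determinantal ideal
of `w`: there are an essential cell `(p,q)`, `t = r_w(p,q) + 1` rows `r₁ < ⋯ < r_t ≤ p` and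
columns `c₁ < ⋯ < c_t ≤ q` with `N_{r_s, c_{t+1-s}} ≥ 1` for all `s`. -/
def CarriesAntidiag {m n : ℕ} (w : Fin m → Option (Fin n))
    (N : Matrix (Fin m) (Fin n) ℕ) : Prop :=
  ∃ (p : Fin m) (q : Fin n), EssCell w p q ∧
    ∃ (rr : Fin (rankFn w ((p : ℕ) + 1) ((q : ℕ) + 1) + 1) → Fin m)
      (cc : Fin (rankFn w ((p : ℕ) + 1) ((q : ℕ) + 1) + 1) → Fin n),
      StrictMono rr ∧ StrictMono cc ∧ (∀ t, rr t ≤ p) ∧ (∀ t, cc t ≤ q) ∧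
      ∀ t, 1 ≤ N (rr t) (cc t.rev)


/-!
For `l ∉ I` the letters `l` and `l + 1` lie in one interval of the filtration, so the bracket
matching of `bracket_l` is the same in `w` and in its subword `w⁽ᵏ⁾` on that interval (the other
letters are ignored by it). Hence `f_l` commutes with `filter_I`, acting on the `k`-th component
only. Moreover `f_l` does not change the interval in which each letter of `w` lies, and a word is
recovered from this sequence of intervals together with its filtration. So `filter_I` is injective
on each connected component of `W^I_m`, and edges of the product lift along it, which gives the
bijection of components and the reflection of edges.
-/

end FilteredRSK

namespace List

lemma set_eq_self_of_getElem?_eq {α : Type*} {l : List α} {p : ℕ} {a : α} (h : l[p]? = some a) :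
    l.set p a = l := by
  obtain ⟨hp, rfl⟩ := List.getElem?_eq_some_iff.1 h
  exact List.set_getElem_self hp

lemma map_set_of_apply_eq {α β : Type*} {h : α → β} {l : List α} {p : ℕ} {a b : α}
    (hb : l[p]? = some b) (hab : h b = h a) : (l.set p a).map h = l.map h := by
  rw [List.map_set]
  exact set_eq_self_of_getElem?_eq (by simp [hb, hab])

lemma filter_set_of_false {α : Type*} {Q : α → Bool} {l : List α} {p : ℕ} {a b : α}
    (hb : l[p]? = some b) (hQb : Q b = false) (hQa : Q a = false) :
    (l.set p a).filter Q = l.filter Q := by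
  have key := congrArg (List.filterMap id)
    (map_set_of_apply_eq (h := Option.guard fun x => Q x) (a := a) hb
      (by simp [Option.guard, hQa, hQb]))
  simp only [List.filterMap_map, Function.id_comp, List.filterMap_eq_filter] at key
  exact key

lemma foldl_filter_of_forall_eq {α β : Type*} {f : β → α → β} {q : α → Bool}
    (hf : ∀ x, q x = false → ∀ s, f s x = s) (l : List α) (s : β) :
    (l.filter q).foldl f s = l.foldl f s := by
  induction l generalizing s with
  | nil => rfl
  | cons x l ih =>
    cases hx : q x
    · rw [List.filter_cons_of_neg (by simp [hx]), ih, List.foldl_cons, hf x hx]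
    · rw [List.filter_cons_of_pos hx, List.foldl_cons, List.foldl_cons, ih]

lemma exists_filter_set_eq_set_filter {α : Type*} {P : α → Bool} {a : α} (ha : P a = true) :
    ∀ {l : List α} {q : ℕ}, q < (l.filter P).length →
      ∃ p b, l[p]? = some b ∧ P b = true ∧ (l.set p a).filter P = (l.filter P).set q a
  | [], _, hq => by simp at hq
  | x :: l, q, hq => by
    by_cases hx : P x = true
    · cases q with
      | zero => exact ⟨0, x, rfl, hx, by simp [hx, ha]⟩
      | succ q =>
        obtain ⟨p, b, hb, hPb, h⟩ :=
          exists_filter_set_eq_set_filter ha (l := l) (q := q) (by simpa [hx] using hq)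
        exact ⟨p + 1, b, hb, hPb, by simp [hx, h]⟩
    · obtain ⟨p, b, hb, hPb, h⟩ :=
        exists_filter_set_eq_set_filter ha (l := l) (q := q) (by simpa [hx] using hq)
      exact ⟨p + 1, b, hb, hPb, by simp [hx, h]⟩

lemma eq_of_map_eq_of_forall_filter_eq {α κ : Type*} {P : κ → α → Bool} {u v : List α}
    (hu : ∀ x ∈ u, ∃ k, P k x = true) (hmap : u.map (fun x k => P k x) = v.map (fun x k => P k x))
    (hfilter : ∀ k, u.filter (P k) = v.filter (P k)) : u = v := by
  induction u generalizing v with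
  | nil => simpa [eq_comm] using hmap
  | cons x u ih =>
    obtain _ | ⟨y, v⟩ := v
    · simp at hmap
    simp only [List.map_cons, List.cons.injEq] at hmap
    obtain ⟨k, hk⟩ := hu x List.mem_cons_self
    have hky : P k y = true := by rw [← congrFun hmap.1 k, hk]
    have hxy : x = y := by
      have := hfilter k
      simp only [List.filter_cons, hk, hky, if_true, List.cons.injEq] at this
      exact this.1
    subst hxy
    refine congrArg _ (ih (fun z hz => hu z (List.mem_cons_of_mem _ hz)) hmap.2 fun k' => ?_)
    have := hfilter k'
    by_cases hk' : P k' x = true <;> simpa [List.filter_cons, hk'] using this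

end List

namespace FilteredRSK

def bracketStep (i : ℕ) (st : List ℕ × List ℕ) (p : ℕ × ℕ) : List ℕ × List ℕ :=
  if p.2 = i + 1 then (st.1, p.1 :: st.2)
  else if p.2 = i then
    match st.2 with
    | [] => (p.1 :: st.1, [])
    | _ :: rest => (st.1, rest)
  else st

/-- `bracketScan` of a word whose letters `(t, x)` carry arbitrary tags `t` instead of their
positions: a subword keeps the tags of the ambient word, whereas its positions are renumbered. -/
def tagScan (i : ℕ) (L : List (ℕ × ℕ)) : List ℕ × List ℕ :=
  L.foldl (bracketStep i) ([], [])

def fTagged (i : ℕ) (L : List (ℕ × ℕ)) : Option (List ℕ) :=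
  (tagScan i L).1.head?.map fun p => L.map fun x => if x.1 = p then i + 1 else x.2

lemma bracketScan_eq_tagScan (i : ℕ) (w : List ℕ) :
    bracketScan i w = tagScan i (w.zipIdx.map Prod.swap) := rfl

lemma bracketStep_map (i : ℕ) (g : ℕ → ℕ) (st : List ℕ × List ℕ) (x : ℕ × ℕ) :
    bracketStep i (Prod.map (List.map g) (List.map g) st) (Prod.map g id x) =
      Prod.map (List.map g) (List.map g) (bracketStep i st x) := by
  obtain ⟨s₁, _ | ⟨_, _⟩⟩ := st <;> obtain ⟨p, a⟩ := x <;>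
    by_cases h₁ : a = i + 1 <;> by_cases h₂ : a = i <;> simp [bracketStep, h₁, h₂]

lemma tagScan_map (i : ℕ) (g : ℕ → ℕ) (L : List (ℕ × ℕ)) :
    tagScan i (L.map (Prod.map g id)) = Prod.map (List.map g) (List.map g) (tagScan i L) := by
  rw [tagScan, List.foldl_map]
  exact List.foldl_hom (Prod.map (List.map g) (List.map g)) (init := ([], []))
    (g₂ := fun st x => bracketStep i st (Prod.map g id x)) (bracketStep_map i g)

lemma tagScan_filter (i : ℕ) {P : ℕ → Bool} (hPi : P i = true) (hPi1 : P (i + 1) = true)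
    (L : List (ℕ × ℕ)) : tagScan i (L.filter fun x => P x.2) = tagScan i L := by
  refine List.foldl_filter_of_forall_eq (fun x hx st => ?_) L _
  have h₁ : x.2 ≠ i + 1 := fun h => by simp [h, hPi1] at hx
  have h₂ : x.2 ≠ i := fun h => by simp [h, hPi] at hx
  simp [bracketStep, h₁, h₂]

lemma mem_of_mem_tagScan_fst {i p : ℕ} {L : List (ℕ × ℕ)} (hp : p ∈ (tagScan i L).1) :
    (p, i) ∈ L := by
  suffices ∀ st, p ∈ (L.foldl (bracketStep i) st).1 → p ∈ st.1 ∨ (p, i) ∈ L by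
    simpa using this _ hp
  clear hp
  induction L with
  | nil => simp
  | cons x L ih =>
    intro st h
    rcases ih _ h with h | h
    · obtain ⟨q, a⟩ := x
      obtain ⟨s₁, _ | ⟨_, _⟩⟩ := st <;>
        by_cases h₁ : a = i + 1 <;> by_cases h₂ : a = i <;> simp_all [bracketStep]
      tauto
    · exact Or.inr (List.mem_cons_of_mem _ h)

lemma fWord_eq_fTagged (i : ℕ) (w : List ℕ) :
    fWord i w = fTagged i (w.zipIdx.map Prod.swap) := by
  unfold fWord fPos fTagged
  rw [← bracketScan_eq_tagScan]
  congr 1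
  funext p
  refine List.ext_getElem (by simp) fun j _ _ => ?_
  simp [List.getElem_set, eq_comm]

lemma exists_of_fWord_eq_some {i : ℕ} {w v : List ℕ} (h : fWord i w = some v) :
    ∃ p, w[p]? = some i ∧ v = w.set p (i + 1) := by
  obtain ⟨p, hp, rfl⟩ := Option.map_eq_some_iff.1 h
  have hmem := mem_of_mem_tagScan_fst (List.mem_of_mem_head? hp)
  exact ⟨p, by simpa [List.mem_zipIdx_iff_getElem?] using hmem, rfl⟩

lemma fTagged_map_of_injOn (i : ℕ) {g : ℕ → ℕ} {L : List (ℕ × ℕ)}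
    (hg : Set.InjOn g {t | ∃ a, (t, a) ∈ L}) :
    fTagged i (L.map (Prod.map g id)) = fTagged i L := by
  unfold fTagged
  rw [tagScan_map]
  cases hp : (tagScan i L).1.head? with
  | none => simp [hp]
  | some p =>
    have hpL : (p, i) ∈ L := mem_of_mem_tagScan_fst (List.mem_of_mem_head? hp)
    simp only [Prod.map_fst, List.head?_map, hp, Option.map_some, List.map_map]
    congr 1
    refine List.map_congr_left fun x hx => ?_
    simp only [Function.comp, Prod.map, id, hg.eq_iff ⟨_, hx⟩ ⟨_, hpL⟩]

lemma fTagged_eq_fWord (i : ℕ) {L : List (ℕ × ℕ)} (hL : (L.map Prod.fst).Nodup) :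
    fTagged i L = fWord i (L.map Prod.snd) := by
  -- `L` is the positional tagging of its letters, relabelled injectively by `g`.
  set g : ℕ → ℕ := fun j => (L.map Prod.fst).getD j 0
  have hL' : ((L.map Prod.snd).zipIdx.map Prod.swap).map (Prod.map g id) = L :=
    List.ext_getElem (by simp) fun j _ hj => by simp [g, hj]
  have hg : Set.InjOn g {t | ∃ a, (t, a) ∈ (L.map Prod.snd).zipIdx.map Prod.swap} := by
    rintro s ⟨a, ha⟩ t ⟨b, hb⟩ hst
    have hs := (List.mem_zipIdx ((List.mem_map_swap _ _ _).1 ha)).2.1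
    have ht := (List.mem_zipIdx ((List.mem_map_swap _ _ _).1 hb)).2.1
    simp only [List.length_map, zero_add] at hs ht
    simp only [g] at hst
    rwa [List.getD_eq_getElem _ _ (by simpa using hs), List.getD_eq_getElem _ _ (by simpa using ht),
      hL.getElem_inj_iff] at hst
  rw [fWord_eq_fTagged, ← fTagged_map_of_injOn i hg, hL']

lemma fTagged_filter (i : ℕ) {P : ℕ → Bool} (hPi : P i = true) (hPi1 : P (i + 1) = true)
    {L : List (ℕ × ℕ)} (hL : (L.map Prod.fst).Nodup) :
    fTagged i (L.filter fun x => P x.2) = (fTagged i L).map (List.filter P) := by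
  unfold fTagged
  rw [tagScan_filter i hPi hPi1]
  cases hp : (tagScan i L).1.head? with
  | none => rfl
  | some p =>
    have hpL := mem_of_mem_tagScan_fst (List.mem_of_mem_head? hp)
    simp only [Option.map_some, List.filter_map]
    congr 2
    refine List.filter_congr fun x hx => ?_
    simp only [Function.comp_apply]
    split_ifs with hxp
    · rw [List.inj_on_of_nodup_map hL hx hpL hxp, hPi, hPi1]
    · rfl

theorem fWord_filter (i : ℕ) {P : ℕ → Bool} (hPi : P i = true) (hPi1 : P (i + 1) = true)
    (w : List ℕ) : fWord i (w.filter P) = (fWord i w).map (List.filter P) := by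
  have hnodup : ((w.zipIdx.map Prod.swap).map Prod.fst).Nodup := by
    rw [List.map_map, show Prod.fst ∘ Prod.swap = Prod.snd from rfl, List.zipIdx_map_snd]
    exact List.nodup_range'
  have hsnd : ((w.zipIdx.map Prod.swap).filter fun x => P x.2).map Prod.snd = w.filter P := by
    have := List.filter_map (f := Prod.snd) (p := P) (l := w.zipIdx.map Prod.swap)
    rw [List.map_map, show Prod.snd ∘ Prod.swap = Prod.fst from rfl, List.zipIdx_map_fst] at this
    exact this.symm
  rw [fWord_eq_fTagged i w, ← fTagged_filter i hPi hPi1 hnodup,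
    fTagged_eq_fWord i (hnodup.sublist (List.filter_sublist.map _)), hsnd]

lemma map_fWord_of_apply_eq {β : Type*} {h : ℕ → β} {i : ℕ} (hi : h i = h (i + 1))
    {w v : List ℕ} (hv : fWord i w = some v) : v.map h = w.map h := by
  obtain ⟨p, hp, rfl⟩ := exists_of_fWord_eq_some hv
  exact List.map_set_of_apply_eq hp hi

lemma filter_fWord_of_false {Q : ℕ → Bool} {i : ℕ} (hQi : Q i = false)
    (hQi1 : Q (i + 1) = false) {w v : List ℕ} (hv : fWord i w = some v) :
    v.filter Q = w.filter Q := by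
  obtain ⟨p, hp, rfl⟩ := exists_of_fWord_eq_some hv
  exact List.filter_set_of_false hp hQi hQi1

section Filtration

variable {m r : ℕ} {ι : Fin (r + 1) → ℕ}

def inBlock (ι : Fin (r + 1) → ℕ) (k : Fin r) (x : ℕ) : Bool :=
  decide (ι k.castSucc + 1 ≤ x ∧ x ≤ ι k.succ)

def blockPattern (ι : Fin (r + 1) → ℕ) (w : List ℕ) : List (Fin r → Bool) :=
  w.map fun x k => inBlock ι k x

lemma filterWord_apply (w : List ℕ) (k : Fin r) : filterWord ι w k = w.filter (inBlock ι k) :=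
  rfl

lemma IsFiltration.exists_inBlock (hι : IsFiltration m ι) {x : ℕ} (h₁ : 1 ≤ x) (h₂ : x ≤ m) :
    ∃ k, inBlock ι k x = true := by
  by_contra! h
  have hlt : ∀ j : Fin (r + 1), ι j < x := by
    intro j
    induction j using Fin.induction with
    | zero => rw [hι.2.1]; omega
    | succ k ih =>
      have := h k
      simp only [inBlock, ne_eq, decide_eq_true_eq, not_and, not_le] at this
      omega
  have := hlt (Fin.last r)
  rw [hι.2.2] at this
  omega

lemma IsFiltration.apply_le (hι : IsFiltration m ι) (j : Fin (r + 1)) : ι j ≤ m :=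
  hι.2.2 ▸ hι.1.monotone (Fin.le_last j)

lemma IsFiltration.le_of_inBlock (hι : IsFiltration m ι) {k : Fin r} {x : ℕ}
    (hx : inBlock ι k x = true) : 1 ≤ x ∧ x ≤ m := by
  have := hι.apply_le k.succ
  simp only [inBlock, decide_eq_true_eq] at hx
  omega

lemma inBlock_eq_false_of_ne (hι : StrictMono ι) {k k' : Fin r} {x : ℕ}
    (hx : inBlock ι k x = true) (hne : k' ≠ k) : inBlock ι k' x = false := by
  simp only [inBlock, decide_eq_true_eq, decide_eq_false_iff_not] at hx ⊢
  rcases lt_or_gt_of_ne hne with h | h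
  · have := hι.monotone (Fin.succ_le_castSucc_iff.2 h)
    omega
  · have := hι.monotone (Fin.succ_le_castSucc_iff.2 h)
    omega

lemma inBlock_succ {l : ℕ} (hl : l ∉ Set.range ι) (k : Fin r) :
    inBlock ι k (l + 1) = inBlock ι k l := by
  have h₁ : ι k.castSucc ≠ l := fun h => hl ⟨_, h⟩
  have h₂ : ι k.succ ≠ l := fun h => hl ⟨_, h⟩
  simp only [inBlock, decide_eq_decide]
  omega

lemma notMem_range_of_lt (hι : StrictMono ι) {k : Fin r} {l : ℕ}
    (h₁ : ι k.castSucc < l) (h₂ : l < ι k.succ) : l ∉ Set.range ι := by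
  rintro ⟨j, rfl⟩
  rcases le_or_gt j k.castSucc with hj | hj
  · exact (hι.monotone hj).not_gt h₁
  · exact (hι.monotone (Fin.castSucc_lt_iff_succ_le.1 hj)).not_gt h₂

lemma IsFiltration.exists_block_of_notMem_range (hι : IsFiltration m ι) {l : ℕ}
    (hl : l ∉ Set.range ι) (h₁ : 1 ≤ l) (h₂ : l < m) :
    ∃ k : Fin r, ι k.castSucc + 1 ≤ l ∧ l < ι k.succ := by
  obtain ⟨k, hk⟩ := hι.exists_inBlock h₁ h₂.le
  simp only [inBlock, decide_eq_true_eq] at hk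
  exact ⟨k, hk.1, lt_of_le_of_ne hk.2 fun h => hl ⟨_, h.symm⟩⟩

end Filtration

section Graph

variable {m r : ℕ} {ι : Fin (r + 1) → ℕ}

lemma wordPiGraph_E_iff {l : ℕ} {p q : Fin r → List ℕ} :
    (WordPiGraph ι).E l p q ↔ ∃ k, ι k.castSucc + 1 ≤ l ∧ l < ι k.succ ∧
      ∃ c, fWord l (p k) = some c ∧ q = Function.update p k c := by
  simp only [WordPiGraph, PCG.pi, WordGraph, eq_comm (a := q), Function.update_eq_iff]
  constructor
  · rintro ⟨k, ⟨h₁, h₂, h⟩, hne⟩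
    exact ⟨k, h₁, h₂, q k, h, rfl, hne⟩
  · rintro ⟨k, h₁, h₂, c, h, rfl, hne⟩
    exact ⟨k, ⟨h₁, h₂, h⟩, hne⟩

lemma map_filterWord_fWord (hι : StrictMono ι) {k : Fin r} {l : ℕ}
    (h₁ : ι k.castSucc + 1 ≤ l) (h₂ : l < ι k.succ) (u : List ℕ) :
    (fWord l u).map (filterWord ι) =
      (fWord l (filterWord ι u k)).map (Function.update (filterWord ι u) k) := by
  have hl : inBlock ι k l = true := by simp only [inBlock, decide_eq_true_eq]; omega
  have hl1 : inBlock ι k (l + 1) = true := by simp only [inBlock, decide_eq_true_eq]; omega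
  rw [filterWord_apply, fWord_filter l hl hl1, Option.map_map]
  cases hu : fWord l u with
  | none => rfl
  | some v =>
    simp only [Option.map_some, Option.some.injEq]
    funext k'
    by_cases hk : k' = k
    · subst hk
      rw [Function.comp_apply, Function.update_self, filterWord_apply]
    · rw [Function.comp_apply, Function.update_of_ne hk, filterWord_apply, filterWord_apply,
        filter_fWord_of_false (inBlock_eq_false_of_ne hι hl hk)
          (inBlock_eq_false_of_ne hι hl1 hk) hu]

lemma mem_filteredWordGraph_verts_iff (hι : IsFiltration m ι) {w : List ℕ} :
    w ∈ (FilteredWordGraph m (Set.range ι)).verts ↔ ∀ x ∈ w, ∃ k, inBlock ι k x = true :=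
  forall₂_congr fun _ _ =>
    ⟨fun h => hι.exists_inBlock h.1 h.2, fun ⟨_, hk⟩ => hι.le_of_inBlock hk⟩

lemma mem_filteredWordGraph_verts_of_blockPattern_eq (hι : IsFiltration m ι) {u v : List ℕ}
    (hu : u ∈ (FilteredWordGraph m (Set.range ι)).verts)
    (h : blockPattern ι u = blockPattern ι v) : v ∈ (FilteredWordGraph m (Set.range ι)).verts := by
  rw [mem_filteredWordGraph_verts_iff hι] at hu ⊢
  have hpat : ∀ b ∈ blockPattern ι u, ∃ k, b k = true := by
    simpa [blockPattern] using hu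
  rw [h] at hpat
  simpa [blockPattern] using hpat

lemma eq_of_blockPattern_eq_of_filterWord_eq (hι : IsFiltration m ι) {u v : List ℕ}
    (hu : u ∈ (FilteredWordGraph m (Set.range ι)).verts)
    (hpat : blockPattern ι u = blockPattern ι v) (hf : filterWord ι u = filterWord ι v) :
    u = v :=
  List.eq_of_map_eq_of_forall_filter_eq ((mem_filteredWordGraph_verts_iff hι).1 hu) hpat
    (congrFun hf)

lemma blockPattern_fWord {l : ℕ} (hl : l ∉ Set.range ι) {u v : List ℕ}
    (h : fWord l u = some v) : blockPattern ι v = blockPattern ι u :=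
  map_fWord_of_apply_eq (funext fun k => (inBlock_succ hl k).symm) h

lemma blockPattern_eq_of_reach {u v : List ℕ}
    (h : (FilteredWordGraph m (Set.range ι)).Reach u v) : blockPattern ι u = blockPattern ι v := by
  induction h with
  | refl => rfl
  | tail _ hadj ih =>
    obtain ⟨-, -, l, hE | hE⟩ := hadj
    · exact ih.trans (blockPattern_fWord hE.1 hE.2.2.2).symm
    · exact ih.trans (blockPattern_fWord hE.1 hE.2.2.2)

lemma IsFiltration.filteredWordGraph_E_of_fWord (hι : IsFiltration m ι) {k : Fin r} {l : ℕ}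
    (h₁ : ι k.castSucc + 1 ≤ l) (h₂ : l < ι k.succ) {u v : List ℕ} (h : fWord l u = some v) :
    (FilteredWordGraph m (Set.range ι)).E l u v :=
  ⟨notMem_range_of_lt hι.1 (by omega) h₂, by omega, h₂.trans_le (hι.apply_le k.succ), h⟩

lemma wordPiGraph_E_filterWord (hι : IsFiltration m ι) {l : ℕ} {u v : List ℕ}
    (h : (FilteredWordGraph m (Set.range ι)).E l u v) :
    (WordPiGraph ι).E l (filterWord ι u) (filterWord ι v) := by
  obtain ⟨hl, h₁, h₂, huv⟩ := h
  obtain ⟨k, hk₁, hk₂⟩ := hι.exists_block_of_notMem_range hl h₁ h₂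
  have := map_filterWord_fWord hι.1 hk₁ hk₂ u
  rw [huv, Option.map_some, eq_comm, Option.map_eq_some_iff] at this
  obtain ⟨c, hc, hcv⟩ := this
  exact wordPiGraph_E_iff.2 ⟨k, hk₁, hk₂, c, hc, hcv.symm⟩

lemma exists_filteredWordGraph_E_of_wordPiGraph_E (hι : IsFiltration m ι) {l : ℕ} {u : List ℕ}
    {c : Fin r → List ℕ} (h : (WordPiGraph ι).E l (filterWord ι u) c) :
    ∃ v, (FilteredWordGraph m (Set.range ι)).E l u v ∧ filterWord ι v = c := by
  obtain ⟨k, h₁, h₂, c', hc', rfl⟩ := wordPiGraph_E_iff.1 h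
  have := map_filterWord_fWord hι.1 h₁ h₂ u
  rw [hc', Option.map_some, Option.map_eq_some_iff] at this
  obtain ⟨v, hv, hfv⟩ := this
  exact ⟨v, hι.filteredWordGraph_E_of_fWord h₁ h₂ hv, hfv⟩

lemma filteredWordGraph_E_of_wordPiGraph_E (hι : IsFiltration m ι) {l : ℕ} {u v : List ℕ}
    (hv : v ∈ (FilteredWordGraph m (Set.range ι)).verts)
    (hpat : blockPattern ι u = blockPattern ι v)
    (h : (WordPiGraph ι).E l (filterWord ι u) (filterWord ι v)) :
    (FilteredWordGraph m (Set.range ι)).E l u v := by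
  obtain ⟨v', hE, hfv'⟩ := exists_filteredWordGraph_E_of_wordPiGraph_E hι h
  obtain rfl : v = v' := eq_of_blockPattern_eq_of_filterWord_eq hι hv
    (hpat.symm.trans (blockPattern_fWord hE.1 hE.2.2.2).symm) hfv'.symm
  exact hE

lemma exists_blockPattern_eq_filterWord_eq (hι : StrictMono ι) {l : ℕ} {u : List ℕ}
    {c : Fin r → List ℕ} (h : (WordPiGraph ι).E l c (filterWord ι u)) :
    ∃ v, blockPattern ι v = blockPattern ι u ∧ filterWord ι v = c := by
  obtain ⟨k, h₁, h₂, c', hc', hfu⟩ := wordPiGraph_E_iff.1 h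
  obtain ⟨q, hq, rfl⟩ := exists_of_fWord_eq_some hc'
  have hl : inBlock ι k l = true := by simp only [inBlock, decide_eq_true_eq]; omega
  have hfuk : filterWord ι u k = (c k).set q (l + 1) := by rw [hfu, Function.update_self]
  have hck : c k = (filterWord ι u k).set q l := by
    rw [hfuk, List.set_set, List.set_eq_self_of_getElem?_eq hq]
  have hqlt : q < (u.filter (inBlock ι k)).length := by
    rw [← filterWord_apply, hfuk, List.length_set]
    exact (List.getElem?_eq_some_iff.1 hq).1
  -- `c k` is `u⁽ᵏ⁾` with one letter `l + 1` lowered to `l`: lower the same letter in `u`.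
  obtain ⟨p, b, hb, hbk, hset⟩ := List.exists_filter_set_eq_set_filter hl hqlt
  refine ⟨u.set p l, List.map_set_of_apply_eq hb (funext fun k' => ?_), funext fun k' => ?_⟩
  · by_cases hk : k' = k
    · rw [hk, hbk, hl]
    · rw [inBlock_eq_false_of_ne hι hbk hk, inBlock_eq_false_of_ne hι hl hk]
  · by_cases hk : k' = k
    · rw [hk, filterWord_apply, hset, hck, filterWord_apply]
    · rw [filterWord_apply, List.filter_set_of_false hb (inBlock_eq_false_of_ne hι hbk hk)
        (inBlock_eq_false_of_ne hι hl hk), ← filterWord_apply, hfu, Function.update_of_ne hk]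

lemma exists_adj_of_wordPiGraph_adj (hι : IsFiltration m ι) {u : List ℕ} {c : Fin r → List ℕ}
    (hu : u ∈ (FilteredWordGraph m (Set.range ι)).verts)
    (h : (WordPiGraph ι).Adj (filterWord ι u) c) :
    ∃ v, (FilteredWordGraph m (Set.range ι)).Adj u v ∧ filterWord ι v = c := by
  obtain ⟨-, -, l, hE | hE⟩ := h
  · obtain ⟨v, huv, rfl⟩ := exists_filteredWordGraph_E_of_wordPiGraph_E hι hE
    have hv := mem_filteredWordGraph_verts_of_blockPattern_eq hι hu
      (blockPattern_fWord huv.1 huv.2.2.2).symm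
    exact ⟨v, ⟨hu, hv, l, .inl huv⟩, rfl⟩
  · obtain ⟨v, hpat, rfl⟩ := exists_blockPattern_eq_filterWord_eq hι.1 hE
    have hv := mem_filteredWordGraph_verts_of_blockPattern_eq hι hu hpat.symm
    exact ⟨v, ⟨hu, hv, l, .inr (filteredWordGraph_E_of_wordPiGraph_E hι hu hpat hE)⟩, rfl⟩

lemma isHomVia_filterWord (hι : IsFiltration m ι) :
    PCG.IsHomVia (FilteredWordGraph m (Set.range ι)) (WordPiGraph ι) (splitWt ι)
      (filterWord ι) :=
  ⟨fun w _ k x hx => by simpa [inBlock] using (List.mem_filter.1 hx).2,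
    fun w _ => funext fun k => (Multiset.filter_coe _ w).symm,
    fun _ _ _ _ _ h => wordPiGraph_E_filterWord hι h⟩

end Graph

/-- For a filtration `I = {0 = i₀ < ⋯ < i_r = m}`, the map
`filter_I : W^I_m → W_{[1,i₁]} □ ⋯ □ W_{[i_{r-1}+1,m]}`, `w ↦ (w⁽¹⁾, …, w⁽ʳ⁾)`,
is a local isomorphism of pre-crystal graphs. -/
theorem filter_local_isomorphism (m : ℕ) {r : ℕ} (ι : Fin (r + 1) → ℕ)
    (hι : IsFiltration m ι) :
    PCG.IsLocalIsoVia (FilteredWordGraph m (Set.range ι)) (WordPiGraph ι)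
      (splitWt ι) (filterWord ι) := by
  refine ⟨isHomVia_filterWord hι, ?_, ?_, ?_⟩
  · intro u hu v _ huv hf
    exact eq_of_blockPattern_eq_of_filterWord_eq hι hu (blockPattern_eq_of_reach huv) hf
  · intro u hu c hc hreach
    clear hc
    induction hreach with
    | refl => exact ⟨u, hu, .refl, rfl⟩
    | tail _ hadj ih =>
      obtain ⟨v, hv, huv, rfl⟩ := ih
      obtain ⟨w, hvw, rfl⟩ := exists_adj_of_wordPiGraph_adj hι hv hadj
      exact ⟨w, hvw.2.1, huv.tail hvw, rfl⟩
  · intro l u _ v hv huv h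
    exact filteredWordGraph_E_of_wordPiGraph_E hι hv (blockPattern_eq_of_reach huv) h

end FilteredRSK
end

section
/- Fix I = {0 = i_0 < … < i_r = m}. If w and w' are Knuth equivalent words on [m], then their I-filtrations are componentwise Knuth equivalent: w^{(k)} ∼_K w'^{(k)} for every 1 ≤ k ≤ r. -/
namespace FilteredRSK

theorem KnuthStep.filter {p : ℕ → Bool} (hp : {x | p x}.OrdConnected) {a b : List ℕ}
    (h : KnuthStep a b) : KnuthEquiv (a.filter p) (b.filter p) := by
  -- Filtering can only break the move if it keeps `x` and `z` but deletes the middle letter `y`.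
  cases h with
  | yzx u v x y z hxy hyz =>
    have hy : p x → p z → p y := fun hx hz => hp.out hx hz ⟨hxy.le, hyz⟩
    cases hpx : p x <;> cases hpy : p y <;> cases hpz : p z <;>
      simp only [List.filter_append, List.filter_cons, hpx, hpy, hpz, ↓reduceIte]
    all_goals first
      | exact .refl _
      | exact .rel _ _ (.yzx _ _ x y z hxy hyz)
      | simp [hpx, hpy, hpz] at hy
  | zxy u v x y z hxy hyz =>
    have hy : p x → p z → p y := fun hx hz => hp.out hx hz ⟨hxy, hyz.le⟩
    cases hpx : p x <;> cases hpy : p y <;> cases hpz : p z <;>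
      simp only [List.filter_append, List.filter_cons, hpx, hpy, hpz, ↓reduceIte]
    all_goals first
      | exact .refl _
      | exact .rel _ _ (.zxy _ _ x y z hxy hyz)
      | simp [hpx, hpy, hpz] at hy

theorem KnuthEquiv.filter {p : ℕ → Bool} (hp : {x | p x}.OrdConnected) {a b : List ℕ}
    (h : KnuthEquiv a b) : KnuthEquiv (a.filter p) (b.filter p) := by
  induction h with
  | rel _ _ hab => exact hab.filter hp
  | refl => exact .refl _
  | symm _ _ _ ih => exact .symm _ _ ih
  | trans _ _ _ _ _ ih₁ ih₂ => exact .trans _ _ _ ih₁ ih₂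

theorem KnuthEquiv.blockFilter (lo hi : ℕ) {a b : List ℕ} (h : KnuthEquiv a b) :
    KnuthEquiv (blockFilter lo hi a) (blockFilter lo hi b) :=
  h.filter (by simpa [Set.Ioc] using (Set.ordConnected_Ioc : (Set.Ioc lo hi).OrdConnected))

theorem knuth_equiv_filtration_general {r : ℕ} (ι : Fin (r + 1) → ℕ) (w w' : List ℕ)
    (h : KnuthEquiv w w') :
    ∀ k : Fin r, KnuthEquiv (filterWord ι w k) (filterWord ι w' k) :=
  fun _ => h.blockFilter _ _

/-- If `w` and `w'` are Knuth equivalent words on `[m]`, then their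
`I`-filtrations are componentwise Knuth equivalent. -/
theorem knuth_equiv_filtration (m : ℕ) {r : ℕ} (ι : Fin (r + 1) → ℕ)
    (hι : IsFiltration m ι) (w w' : List ℕ)
    (hw : ∀ x ∈ w, 1 ≤ x ∧ x ≤ m) (hw' : ∀ x ∈ w', 1 ≤ x ∧ x ≤ m)
    (h : KnuthEquiv w w') :
    ∀ k : Fin r, KnuthEquiv (filterWord ι w k) (filterWord ι w' k) :=
  knuth_equiv_filtration_general ι w w' h

end FilteredRSK
end

section
/- Let w be a partial permutation with rank function r_w, and let X_w = {A ∈ Mat_{m,n}(ℂ) : for all (i,j), the rank of the northwest i×j submatrix of A is at most r_w(i,j)} be the matrix Schubert variety. Fix I = {0 = i_0 < … < i_r = m} and J = {0 = j_0 < … < j_s = n} with Desc_row(w) ⊆ I and Desc_col(w) ⊆ J. Then X_w is stable under the action (g,g')·A = g^{-1} A (g'^{-1})^T, where g ranges over invertible block-diagonal m×m complex matrices with diagonal blocks of sizes i_1−i_0, …, i_r−i_{r−1}, and g' over invertible block-diagonal n×n complex matrices with diagonal blocks of sizes j_1−j_0, …, j_s−j_{s−1}. -/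
/-! For cuts `i ∈ I` and `j ∈ J`, the northwest `i × j` corner of `g⁻¹ A (g'⁻¹)ᵀ` is the product
of the northwest corners of `g⁻¹`, `A` and `(g'⁻¹)ᵀ`, because inverting keeps a block-diagonal
matrix block-diagonal; so the rank conditions of `X_w` hold at all corners in `I × J`.
They propagate to the other rows: if `0 < i < m` is not a row descent, then either
`r_w(i+1, j) = r_w(i, j)`, and the condition at `i` follows from the one at `i + 1` because the
rank grows with the submatrix, or `r_w(i, j) = r_w(i-1, j) + 1`, and it follows from the one at
`i - 1` because one more row raises the rank by at most one. Induction on `r_w(i, j)` and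
`m - i` covers all rows, and the same argument covers all columns. -/

namespace Matrix

variable {R : Type*} {l m n : Type*}

theorem rank_le_rank_submatrix_add_one [Field R] [Finite l] [Finite m] [Fintype n]
    (M : Matrix m n R) (f : l → m) (a₀ : m) (hf : ∀ a, a ≠ a₀ → a ∈ Set.range f) :
    M.rank ≤ (M.submatrix f id).rank + 1 := by
  rw [rank_eq_finrank_span_row, rank_eq_finrank_span_row]
  have hspan : Submodule.span R (Set.range M.row) ≤
      Submodule.span R (Set.range (M.submatrix f id).row) ⊔ Submodule.span R {M.row a₀} := by
    rw [← Submodule.span_union]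
    refine Submodule.span_mono ?_
    rintro _ ⟨a, rfl⟩
    by_cases ha : a = a₀
    · exact Or.inr (ha ▸ rfl)
    · obtain ⟨b, rfl⟩ := hf a ha
      exact Or.inl ⟨b, rfl⟩
  calc _ ≤ _ := Submodule.finrank_mono hspan
    _ ≤ _ := Submodule.finrank_add_le_finrank_add_finrank _ _
    _ ≤ _ := by
      gcongr
      simpa using finrank_span_le_card (R := R) {M.row a₀}

theorem rank_toBlock_mul_mul_transpose_le [CommRing R] [StrongRankCondition R] [Fintype m]
    [Fintype n] {p : m → Prop} {q : n → Prop} [DecidablePred p] [DecidablePred q]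
    (G : Matrix m m R) (A : Matrix m n R) (H : Matrix n n R)
    (hG : ∀ a b, p a → ¬ p b → G a b = 0) (hH : ∀ a b, q a → ¬ q b → H a b = 0) :
    ((G * A * Hᵀ).toBlock p q).rank ≤ (A.toBlock p q).rank := by
  have hG0 : G.toBlock p (fun b => ¬ p b) = 0 := by
    ext a b
    exact hG a b a.2 b.2
  have hH0 : Hᵀ.toBlock (fun a => ¬ q a) q = 0 := by
    ext a b
    exact hH b a b.2 a.2
  have hfactor : (G * A * Hᵀ).toBlock p q =
      G.toBlock p p * A.toBlock p q * Hᵀ.toBlock q q := by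
    rw [toBlock_mul_eq_add _ q, hH0, Matrix.mul_zero, add_zero, toBlock_mul_eq_add _ p, hG0,
      Matrix.zero_mul, add_zero]
  rw [hfactor]
  exact (rank_mul_le_left _ _).trans (rank_mul_le_right _ _)

end Matrix

namespace FilteredRSK

theorem le_of_le_on_cuts {m : ℕ} {S : Set ℕ} {f ρ : ℕ → ℕ}
    (hf_mono : ∀ i < m, f i ≤ f (i + 1)) (hf_step : ∀ i < m, f (i + 1) ≤ f i + 1)
    (h0 : 0 ∈ S) (hm : m ∈ S)
    (hρ : ∀ i, i + 1 < m → ρ (i + 1) ≤ ρ i → ρ (i + 1) < ρ (i + 2) → i + 1 ∈ S)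
    (hS : ∀ i ∈ S, i ≤ m → f i ≤ ρ i) : ∀ i ≤ m, f i ≤ ρ i
  | 0, _ => hS 0 h0 (Nat.zero_le m)
  | i + 1, hi => by
    by_cases hiS : i + 1 ∈ S
    · exact hS _ hiS hi
    have him : i + 1 < m := lt_of_le_of_ne hi (by rintro rfl; exact hiS hm)
    by_cases hflat : ρ (i + 2) ≤ ρ (i + 1)
    · calc f (i + 1) ≤ f (i + 2) := hf_mono _ him
        _ ≤ ρ (i + 2) := le_of_le_on_cuts hf_mono hf_step h0 hm hρ hS (i + 2) him
        _ ≤ ρ (i + 1) := hflat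
    · have hup : ρ i < ρ (i + 1) := by
        by_contra! hle
        exact hiS (hρ i him hle (not_le.1 hflat))
      calc f (i + 1) ≤ f i + 1 := hf_step _ (by omega)
        _ ≤ ρ i + 1 := by gcongr; exact le_of_le_on_cuts hf_mono hf_step h0 hm hρ hS i (by omega)
        _ ≤ ρ (i + 1) := hup
termination_by i => ρ i * (m + 1) + (m - i)
decreasing_by
  all_goals simp only [Nat.succ_eq_add_one]
  · have := Nat.mul_le_mul_right (m + 1) hflat
    omega
  · have := Nat.mul_le_mul_right (m + 1) hup
    rw [Nat.succ_mul] at this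
    omega

section

open Matrix

variable {m n : ℕ}

/-- Unlike the `Fin.castLE` corners in `XSchubert`, this is defined for all `i j : ℕ`, so that
rank conditions can be propagated along plain natural numbers. -/
noncomputable def nwRank (B : Matrix (Fin m) (Fin n) ℂ) (i j : ℕ) : ℕ :=
  (B.toBlock (fun a => (a : ℕ) < i) (fun b => (b : ℕ) < j)).rank

theorem rank_submatrix_castLE (B : Matrix (Fin m) (Fin n) ℂ) {i j : ℕ} (hi : i ≤ m)
    (hj : j ≤ n) : (B.submatrix (Fin.castLE hi) (Fin.castLE hj)).rank = nwRank B i j := by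
  have hblock : B.submatrix (Fin.castLE hi) (Fin.castLE hj) =
      (B.toBlock _ _).submatrix (Fin.castLEquiv hi) (Fin.castLEquiv hj) := rfl
  rw [hblock, rank_submatrix, nwRank]

theorem mem_XSchubert_iff (w : Fin m → Option (Fin n)) (B : Matrix (Fin m) (Fin n) ℂ) :
    B ∈ XSchubert w ↔ ∀ i ≤ m, ∀ j ≤ n, nwRank B i j ≤ rankFn w i j := by
  simp only [XSchubert, Set.mem_ofPred_eq, rank_submatrix_castLE]

theorem nwRank_transpose (B : Matrix (Fin m) (Fin n) ℂ) (i j : ℕ) :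
    nwRank Bᵀ j i = nwRank B i j :=
  rank_transpose _

theorem nwRank_mono (B : Matrix (Fin m) (Fin n) ℂ) {i i' j j' : ℕ} (hi : i ≤ i')
    (hj : j ≤ j') : nwRank B i j ≤ nwRank B i' j' := by
  have hblock : B.toBlock (fun a => (a : ℕ) < i) (fun b => (b : ℕ) < j) =
      (B.toBlock (fun a => (a : ℕ) < i') (fun b => (b : ℕ) < j')).submatrix
        (fun a => ⟨a.1, a.2.trans_le hi⟩)
        (fun b => ⟨b.1, b.2.trans_le hj⟩) := rfl
  rw [nwRank, nwRank, hblock]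
  exact rank_submatrix_le _ _ _

theorem nwRank_succ_row_le (B : Matrix (Fin m) (Fin n) ℂ) {i : ℕ} (hi : i < m) (j : ℕ) :
    nwRank B (i + 1) j ≤ nwRank B i j + 1 := by
  have hblock : B.toBlock (fun a => (a : ℕ) < i) (fun b => (b : ℕ) < j) =
      (B.toBlock (fun a => (a : ℕ) < i + 1) (fun b => (b : ℕ) < j)).submatrix
        (fun a => ⟨a.1, Nat.lt_succ_of_lt a.2⟩) id := rfl
  rw [nwRank, nwRank, hblock]
  refine rank_le_rank_submatrix_add_one _ _ ⟨⟨i, hi⟩, Nat.lt_succ_self i⟩ fun a ha => ?_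
  exact ⟨⟨a.1, lt_of_le_of_ne (Nat.lt_succ_iff.1 a.2) fun h => ha (Subtype.ext (Fin.ext h))⟩,
    rfl⟩

theorem nwRank_succ_col_le (B : Matrix (Fin m) (Fin n) ℂ) (i : ℕ) {j : ℕ} (hj : j < n) :
    nwRank B i (j + 1) ≤ nwRank B i j + 1 := by
  simpa only [nwRank_transpose] using nwRank_succ_row_le Bᵀ hj i

theorem IsBlockDiag.apply_eq_zero {r : ℕ} {ι : Fin (r + 1) → ℕ} (hι : Monotone ι)
    {g : Matrix (Fin m) (Fin m) ℂ} (hg : IsBlockDiag ι g) (k : Fin (r + 1)) {a b : Fin m}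
    (ha : (a : ℕ) < ι k) (hb : ι k ≤ (b : ℕ)) : g a b = 0 := by
  refine hg a b ?_
  rintro ⟨k', hk'a, ha', -, hb'⟩
  have hk : k'.castSucc < k := hι.reflect_lt (hk'a.trans_lt ha)
  have := hι (Fin.castSucc_lt_iff_succ_le.1 hk)
  omega

theorem IsBlockDiag.inv_apply_eq_zero {r : ℕ} {ι : Fin (r + 1) → ℕ} (hι : Monotone ι)
    {g : Matrix (Fin m) (Fin m) ℂ} (hg : IsUnit g) (hgb : IsBlockDiag ι g) (k : Fin (r + 1))
    {a b : Fin m} (ha : (a : ℕ) < ι k) (hb : ι k ≤ (b : ℕ)) : g⁻¹ a b = 0 := by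
  have := hg.invertible
  have htri : g.BlockTriangular fun a => decide ((a : ℕ) < ι k) := by
    intro a b hab
    simp only [Bool.lt_iff, decide_eq_false_iff_not, not_lt, decide_eq_true_eq] at hab
    exact hgb.apply_eq_zero hι k hab.2 hab.1
  exact blockTriangular_inv_of_blockTriangular htri
    (Bool.lt_iff.2 ⟨decide_eq_false hb.not_gt, decide_eq_true ha⟩)

theorem rankFn_lt_rankFn_iff (w : Fin m → Option (Fin n)) {i i' j j' : ℕ} (hi : i ≤ i')
    (hj : j ≤ j') : rankFn w i j < rankFn w i' j' ↔
      ∃ a b, w a = some b ∧ (a : ℕ) < i' ∧ (b : ℕ) < j' ∧ ¬((a : ℕ) < i ∧ (b : ℕ) < j) := by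
  have hsub : {a : Fin m | (a : ℕ) < i ∧ ∃ b : Fin n, w a = some b ∧ (b : ℕ) < j} ⊆
      {a | (a : ℕ) < i' ∧ ∃ b : Fin n, w a = some b ∧ (b : ℕ) < j'} :=
    fun a ⟨ha, b, hab, hb⟩ => ⟨ha.trans_le hi, b, hab, hb.trans_le hj⟩
  constructor
  · intro hlt
    by_contra! hnone
    refine hlt.not_ge (Set.ncard_le_ncard fun a ⟨ha, b, hab, hb⟩ => ?_)
    obtain ⟨ha', hb'⟩ := hnone a b hab ha hb
    exact ⟨ha', b, hab, hb'⟩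
  · rintro ⟨a, b, hab, ha, hb, hnew⟩
    refine Set.ncard_lt_ncard ⟨hsub, fun hsup => hnew ?_⟩
    obtain ⟨ha', b', hab', hb'⟩ := hsup ⟨ha, b, hab, hb⟩
    obtain rfl : b' = b := Option.some.inj (hab'.symm.trans hab)
    exact ⟨ha', hb'⟩

theorem mem_descRow_of_rankFn {w : Fin m → Option (Fin n)} (hw : IsPartialPerm w) {i j : ℕ}
    (hi : i + 1 < m) (hflat : rankFn w (i + 1) j ≤ rankFn w i j)
    (hup : rankFn w (i + 1) j < rankFn w (i + 2) j) : i + 1 ∈ DescRow w := by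
  obtain ⟨a, b, hab, ha, hb, hnew⟩ := (rankFn_lt_rankFn_iff w (Nat.le_succ _) le_rfl).1 hup
  obtain rfl : a = ⟨i + 1, hi⟩ := Fin.ext (show (a : ℕ) = i + 1 by omega)
  have hprev : ∀ b', w ⟨i, by omega⟩ = some b' → j ≤ b' := fun b' hab' => by
    by_contra! hb'
    exact hflat.not_gt ((rankFn_lt_rankFn_iff w (Nat.le_succ _) le_rfl).2
      ⟨_, b', hab', Nat.lt_succ_self i, hb', fun h => (lt_irrefl i h.1).elim⟩)
  refine ⟨by omega, hi, b, ⟨fun b' hab' => hb.trans_le (hprev b' hab'), ?_⟩, ?_⟩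
  · intro a' ha' hab'
    have := congrArg Fin.val (hw _ _ _ hab' hab)
    simp only [Fin.le_def] at ha'
    omega
  · exact fun j' hj' => hj'.1 b hab

theorem mem_descCol_of_rankFn {w : Fin m → Option (Fin n)} {i j : ℕ} (hj : j + 1 < n)
    (hflat : rankFn w i (j + 1) ≤ rankFn w i j)
    (hup : rankFn w i (j + 1) < rankFn w i (j + 2)) : j + 1 ∈ DescCol w := by
  obtain ⟨a, b, hab, ha, hb, hnew⟩ := (rankFn_lt_rankFn_iff w le_rfl (Nat.le_succ _)).1 hup
  obtain rfl : b = ⟨j + 1, hj⟩ := Fin.ext (show (b : ℕ) = j + 1 by omega)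
  have hprev : ∀ a' : Fin m, (a' : ℕ) < i → w a' ≠ some ⟨j, by omega⟩ := fun a' ha' hab' =>
    hflat.not_gt ((rankFn_lt_rankFn_iff w le_rfl (Nat.le_succ _)).2
      ⟨a', _, hab', ha', Nat.lt_succ_self j, fun h => (lt_irrefl j h.2).elim⟩)
  refine ⟨by omega, hj, a, ⟨fun b' hab' => ?_, fun a' ha' => hprev a' (lt_of_le_of_lt ha' ha)⟩, ?_⟩
  · obtain rfl := Option.some.inj (hab'.symm.trans hab)
    exact Nat.lt_succ_self j
  · intro i' hi'
    by_contra! hle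
    exact hi'.2 a hle hab

theorem IsFiltration.le {r : ℕ} {ι : Fin (r + 1) → ℕ} (hι : IsFiltration m ι)
    (k : Fin (r + 1)) : ι k ≤ m :=
  hι.2.2 ▸ hι.1.monotone (Fin.le_last k)

theorem mem_XSchubert_of_le_on_cuts {r s : ℕ} {ι : Fin (r + 1) → ℕ} {κ : Fin (s + 1) → ℕ}
    (hι : IsFiltration m ι) (hκ : IsFiltration n κ) {w : Fin m → Option (Fin n)}
    (hw : IsPartialPerm w) (hdr : DescRow w ⊆ Set.range ι) (hdc : DescCol w ⊆ Set.range κ)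
    {B : Matrix (Fin m) (Fin n) ℂ} (hB : ∀ k l, nwRank B (ι k) (κ l) ≤ rankFn w (ι k) (κ l)) :
    B ∈ XSchubert w := by
  have hcuts : ∀ l, ∀ i ≤ m, nwRank B i (κ l) ≤ rankFn w i (κ l) := fun l =>
    le_of_le_on_cuts (S := Set.range ι) (fun i _ => nwRank_mono B (Nat.le_succ i) le_rfl)
      (fun i hi => nwRank_succ_row_le B hi _) ⟨0, hι.2.1⟩ ⟨Fin.last r, hι.2.2⟩
      (fun i hi hflat hup => hdr (mem_descRow_of_rankFn hw hi hflat hup))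
      (by rintro _ ⟨k, rfl⟩ -; exact hB k l)
  refine (mem_XSchubert_iff w B).2 fun i hi => ?_
  exact le_of_le_on_cuts (S := Set.range κ) (fun j _ => nwRank_mono B le_rfl (Nat.le_succ j))
    (fun j hj => nwRank_succ_col_le B i hj) ⟨0, hκ.2.1⟩ ⟨Fin.last s, hκ.2.2⟩
    (fun j hj hflat hup => hdc (mem_descCol_of_rankFn hj hflat hup))
    (by rintro _ ⟨l, rfl⟩ -; exact hcuts l i hi)

end

open Matrix in
/-- If `Desc_row(w) ⊆ I` and `Desc_col(w) ⊆ J`, then the matrix Schubert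
variety `X_w` is stable under the action `(g,g') · A = g⁻¹ A (g'⁻¹)ᵀ` of the Levi group of
invertible block-diagonal matrices with blocks of sizes `i₁-i₀, …, i_r-i_{r-1}` and
`j₁-j₀, …, j_s-j_{s-1}`. -/
theorem matrix_schubert_levi_stable (m n : ℕ) {r s : ℕ}
    (ι : Fin (r + 1) → ℕ) (κ : Fin (s + 1) → ℕ)
    (hι : IsFiltration m ι) (hκ : IsFiltration n κ)
    (w : Fin m → Option (Fin n)) (hw : IsPartialPerm w)
    (hdr : DescRow w ⊆ Set.range ι) (hdc : DescCol w ⊆ Set.range κ)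
    (g : Matrix (Fin m) (Fin m) ℂ) (g' : Matrix (Fin n) (Fin n) ℂ)
    (hg : IsUnit g) (hg' : IsUnit g')
    (hgb : IsBlockDiag ι g) (hg'b : IsBlockDiag κ g')
    (A : Matrix (Fin m) (Fin n) ℂ) (hA : A ∈ XSchubert w) :
    g⁻¹ * A * (g'⁻¹)ᵀ ∈ XSchubert w := by
  refine mem_XSchubert_of_le_on_cuts hι hκ hw hdr hdc fun k l => ?_
  calc nwRank (g⁻¹ * A * (g'⁻¹)ᵀ) (ι k) (κ l) ≤ nwRank A (ι k) (κ l) :=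
        rank_toBlock_mul_mul_transpose_le _ _ _
          (fun _ _ ha hb => hgb.inv_apply_eq_zero hι.1.monotone hg k ha (not_lt.1 hb))
          (fun _ _ ha hb => hg'b.inv_apply_eq_zero hκ.1.monotone hg' l ha (not_lt.1 hb))
    _ ≤ rankFn w (ι k) (κ l) := (mem_XSchubert_iff w A).1 hA _ (hι.le k) _ (hκ.le l)

end FilteredRSK
end
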